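/- Let X be a normal space. Then every one-point subset of X is Gδ if and only if for every p ∈ X, the characteristic function χ_{p} belongs to B₁(X) and the ideal it generates is a minimal ideal of B₁(X). -/
import Mathlib

open Filter Topology

def IsBaireOne {X : Type*} [TopologicalSpace X] (f : X → ℝ) : Prop :=
  ∃ F : ℕ → X → ℝ, (∀ n, Continuous (F n)) ∧
    ∀ x, Filter.Tendsto (fun n => F n x) Filter.atTop (nhds (f x))

def B1 (X : Type*) [TopologicalSpace X] : Subring (X → ℝ) where
  carrier := {f | IsBaireOne f}
  zero_mem' := ⟨fun _ _ => 0, fun _ => continuous_const, fun _ => tendsto_const_nhds⟩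
  one_mem' := ⟨fun _ _ => 1, fun _ => continuous_const, fun _ => tendsto_const_nhds⟩
  add_mem' := by
    rintro f g ⟨F, hF, hFf⟩ ⟨G, hG, hGg⟩
    exact ⟨fun n => F n + G n, fun n => (hF n).add (hG n), fun x => (hFf x).add (hGg x)⟩
  mul_mem' := by
    rintro f g ⟨F, hF, hFf⟩ ⟨G, hG, hGg⟩
    exact ⟨fun n => F n * G n, fun n => (hF n).mul (hG n), fun x => (hFf x).mul (hGg x)⟩
  neg_mem' := by
    rintro f ⟨F, hF, hFf⟩
    exact ⟨fun n => -F n, fun n => (hF n).neg, fun x => (hFf x).neg⟩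

def zset {X : Type*} [TopologicalSpace X] (f : ↥(B1 X)) : Set X := {x | (f : X → ℝ) x = 0}

noncomputable def chi {X : Type*} (p : X) : X → ℝ := Set.indicator {p} (fun _ => 1)

def IsFsigma {X : Type*} [TopologicalSpace X] (s : Set X) : Prop :=
  ∃ c : ℕ → Set X, (∀ n, IsClosed (c n)) ∧ s = ⋃ n, c n

lemma chi_self {X : Type*} (p : X) : chi p p = 1 := by
  simp [chi]

lemma chi_ne {X : Type*} {p x : X} (h : x ≠ p) : chi p x = 0 := by
  simp [chi, h]

lemma const_mem_B1 {X : Type*} [TopologicalSpace X] (c : ℝ) :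
    (fun _ : X => c) ∈ B1 X :=
  ⟨fun _ _ => c, fun _ => continuous_const, fun _ => tendsto_const_nhds⟩

theorem stmt_7 {X : Type*} [TopologicalSpace X] [T1Space X] [NormalSpace X] :
    (∀ p : X, IsGδ ({p} : Set X)) ↔
      ∀ p : X, ∃ g : ↥(B1 X), (g : X → ℝ) = chi p ∧ IsAtom (Ideal.span {g}) := by
  constructor
  · intro H p
    obtain ⟨U, hUo, hUe⟩ := (H p).eq_iInter_nat
    -- Urysohn functions
    have key : ∀ n : ℕ, ∃ f : C(X, ℝ), Set.EqOn f 0 (U n)ᶜ ∧ Set.EqOn f 1 {p}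
        ∧ ∀ x, f x ∈ Set.Icc (0:ℝ) 1 := by
      intro n
      have hpU : p ∈ U n := by
        have : p ∈ ⋂ n, U n := by rw [← hUe]; exact rfl
        exact Set.mem_iInter.1 this n
      exact exists_continuous_zero_one_of_isClosed (isClosed_compl_iff.2 (hUo n))
        isClosed_singleton (Set.disjoint_left.2 fun a ha hap =>
          ha (Set.mem_singleton_iff.1 hap ▸ hpU))
    choose f hf0 hf1 _hf01 using key
    set F : ℕ → X → ℝ := fun n x => ∏ i ∈ Finset.range (n+1), f i x with hF
    have hFc : ∀ n, Continuous (F n) :=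
      fun n => continuous_finset_prod _ fun i _ => (f i).continuous
    have hchi : IsBaireOne (chi p) := by
      refine ⟨F, hFc, fun x => ?_⟩
      rcases eq_or_ne x p with rfl | hx
      · have : ∀ n, F n x = 1 := by
          intro n
          simp only [hF]
          apply Finset.prod_eq_one
          intro i _
          exact hf1 i rfl
        rw [chi_self]
        simp only [this]
        exact tendsto_const_nhds
      · have hxU : ∃ m, x ∉ U m := by
          by_contra hc
          push_neg at hc
          have : x ∈ ({p} : Set X) := by rw [hUe]; exact Set.mem_iInter.2 hc
          exact hx this
        obtain ⟨m, hm⟩ := hxU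
        have : ∀ n ≥ m, F n x = 0 := by
          intro n hn
          simp only [hF]
          apply Finset.prod_eq_zero (Finset.mem_range.2 (Nat.lt_succ_of_le hn))
          exact hf0 m hm
        rw [chi_ne hx]
        exact tendsto_atTop_of_eventually_const this
    refine ⟨⟨chi p, hchi⟩, rfl, ?_⟩
    set g : ↥(B1 X) := ⟨chi p, hchi⟩ with hg
    constructor
    · rw [Ne, Ideal.span_singleton_eq_bot]
      intro h
      have : chi p p = 0 := by
        have := congrArg (fun f : ↥(B1 X) => (f : X → ℝ) p) h
        simpa [hg] using this
      rw [chi_self] at this; norm_num at this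
    · intro b hb
      by_contra hbne
      obtain ⟨h, hhb, hh0⟩ := (Submodule.ne_bot_iff b).1 hbne
      have hhspan : h ∈ Ideal.span {g} := hb.le hhb
      obtain ⟨c, hc⟩ := Ideal.mem_span_singleton.1 hhspan
      -- h = g * c as functions
      have hfun : ∀ x, (h : X → ℝ) x = chi p x * (c : X → ℝ) x := by
        intro x
        rw [hc]; rfl
      have hcp : (c : X → ℝ) p ≠ 0 := by
        intro hcp0
        apply hh0
        apply Subtype.ext
        funext x
        rcases eq_or_ne x p with rfl | hx
        · simp [hfun x, hcp0]
        · simp [hfun x, chi_ne hx]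
      -- g = const (c p)⁻¹ * h ∈ b
      have hgb : g ∈ b := by
        have : g = (⟨fun _ => ((c : X → ℝ) p)⁻¹, const_mem_B1 _⟩ : ↥(B1 X)) * h := by
          apply Subtype.ext
          funext x
          show chi p x = ((c : X → ℝ) p)⁻¹ * (h : X → ℝ) x
          rcases eq_or_ne x p with rfl | hx
          · rw [hfun, chi_self, one_mul, inv_mul_cancel₀ hcp]
          · rw [hfun, chi_ne hx, zero_mul, mul_zero]
        rw [this]
        exact Ideal.mul_mem_left b _ hhb
      exact absurd (Ideal.span_le.2 (Set.singleton_subset_iff.2 hgb)) (not_le_of_gt hb)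
  · intro H p
    obtain ⟨g, hg, -⟩ := H p
    obtain ⟨F, hFc, hFt⟩ := g.2
    rw [hg] at hFt
    set C : ℕ → Set X := fun N => ⋂ n, ⋂ (_ : N ≤ n), (F n) ⁻¹' Set.Iic (1/2 : ℝ) with hC
    have hCclosed : ∀ N, IsClosed (C N) := by
      intro N
      exact isClosed_iInter fun n => isClosed_iInter fun _ =>
        (isClosed_Iic).preimage (hFc n)
    have heq : ({p} : Set X) = ⋂ N, (C N)ᶜ := by
      ext x
      simp only [Set.mem_singleton_iff, Set.mem_iInter, Set.mem_compl_iff]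
      constructor
      · rintro rfl N hN
        have h1 : Tendsto (fun n => F n x) atTop (nhds 1) := by
          simpa [chi_self] using hFt x
        have hev : ∀ᶠ n in atTop, (1/2 : ℝ) < F n x :=
          h1.eventually (eventually_gt_nhds (by norm_num))
        obtain ⟨M, hM⟩ := (eventually_atTop).1 hev
        have := Set.mem_iInter.1 (Set.mem_iInter.1 hN (max M N)) (le_max_right M N)
        simp only [Set.mem_preimage, Set.mem_Iic] at this
        exact absurd this (not_le.2 (hM _ (le_max_left M N)))
      · intro hx
        by_contra hxp
        have h0 : Tendsto (fun n => F n x) atTop (nhds 0) := by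
          simpa [chi_ne hxp] using hFt x
        have hev : ∀ᶠ n in atTop, F n x < 1/2 :=
          h0.eventually (eventually_lt_nhds (by norm_num))
        obtain ⟨N, hN⟩ := (eventually_atTop).1 hev
        apply hx N
        exact Set.mem_iInter.2 fun n => Set.mem_iInter.2 fun hn =>
          Set.mem_preimage.2 (Set.mem_Iic.2 (le_of_lt (hN n hn)))
    rw [heq]
    exact IsGδ.iInter_of_isOpen fun N => (hCclosed N).isOpen_compl
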